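/- arXiv:2406.03335 — 2 statements merged into one kernel-verified Lean document; each statement's English description precedes it below -/
import Mathlib

section
/- Fix c ∈ [1,∞) and for each positive integer i let h_i(x) = (x/a₊)^i, where a₊ = (1 + √c)². Then i·γ_c(h_i) → 0 as i → ∞. -/
open MeasureTheory ProbabilityTheory Filter Topology

noncomputable section

/-- `a₊ = (1 + √c)²`. -/
def aplus (c : ℝ) : ℝ := (1 + Real.sqrt c) ^ 2

/-- `a₋ = (1 − √c)²`. -/
def aminus (c : ℝ) : ℝ := (1 - Real.sqrt c) ^ 2

/-- `γ_c(f) = (1/2π) ∫_{a₋}^{a₊} f(x) √((a₊ − x)(x − a₋))/x dx`. -/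
def gamC (c : ℝ) (f : ℝ → ℝ) : ℝ :=
  (1 / (2 * Real.pi)) *
    ∫ x in aminus c..aplus c, f x * Real.sqrt ((aplus c - x) * (x - aminus c)) / x

lemma sqrt_le_lin {y s : ℝ} (hy : 0 ≤ y) (hs : 0 < s) :
    Real.sqrt y ≤ s * y / 2 + 1 / (2 * s) := by
  have h1 := Real.sq_sqrt hy
  have h1' : s ^ 2 * Real.sqrt y ^ 2 = s ^ 2 * y := by rw [h1]
  have h2 := Real.sqrt_nonneg y
  have h3 : 0 ≤ (s * Real.sqrt y - 1) ^ 2 := sq_nonneg _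
  rw [div_add_div _ _ (by norm_num) (by positivity), le_div_iff₀ (by positivity)]
  nlinarith [h3, h1']

lemma final_arith (n sa si a pi' P : ℝ) (hn0 : 0 ≤ n) (hsi : 0 < si) (hsii : si*si = n+1)
    (ha0 : 0 < a) (hsa : 0 < sa) (hpi : 0 < pi') (hP : 0 < P) :
    (n+1) * (1/(2*pi') * ((si*a/2 + 1/(2*si))*sa/P*P/(n+1) +
      -(si/2)*sa/P*(P*a)/(n+2))) ≤ sa*(a+1)/(4*pi')/si := by
  have hn2 : (0:ℝ) < n + 2 := by linarith
  have hn1 : (0:ℝ) < n + 1 := by linarith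
  have e1 : (n+1) * (1/(2*pi') * ((si*a/2 + 1/(2*si))*sa/P*P/(n+1) +
      -(si/2)*sa/P*(P*a)/(n+2))) = sa/(2*pi') * (si*a/(2*(n+2)) + 1/(2*si)) := by
    field_simp
    ring
  have e2 : si*a/(2*(n+2)) ≤ a/(2*si) := by
    rw [div_le_div_iff₀ (by positivity) (by positivity)]
    nlinarith
  have e3 : sa/(2*pi') * (a/(2*si) + 1/(2*si)) = sa*(a+1)/(4*pi')/si := by
    field_simp
    ring
  rw [e1, ← e3]
  have h0 : 0 ≤ sa/(2*pi') := by positivity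
  apply mul_le_mul_of_nonneg_left _ h0
  linarith

/-- Lemma 2.5(1) of the paper: with `h_i(x) = (x/a₊)^i`, we have `i γ_c(h_i) → 0`. -/
theorem gamC_monomial_decay (c : ℝ) (hc : 1 ≤ c) :
    Tendsto (fun i : ℕ => (i : ℝ) * gamC c fun x => (x / aplus c) ^ i) atTop (𝓝 0) := by
  have hc0 : (0:ℝ) ≤ c := by linarith
  have hsc : 1 ≤ Real.sqrt c := by
    rw [show (1:ℝ) = Real.sqrt 1 by simp]
    exact Real.sqrt_le_sqrt hc
  set a := aplus c with ha_def
  set b := aminus c with hb_def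
  have ha4 : 4 ≤ a := by
    rw [ha_def]; unfold aplus; nlinarith
  have ha0 : (0:ℝ) < a := by linarith
  have hb0 : (0:ℝ) ≤ b := sq_nonneg _
  have hba : b ≤ a := by
    rw [hb_def, ha_def]; unfold aminus aplus; nlinarith
  have hsa : 0 < Real.sqrt a := Real.sqrt_pos.mpr ha0
  have hsaa : Real.sqrt a * Real.sqrt a = a := Real.mul_self_sqrt ha0.le
  have hpi : 0 < Real.pi := Real.pi_pos
  set C : ℝ := Real.sqrt a * (a + 1) / (4 * Real.pi) with hC_def
  -- nonnegativity
  have hnonneg : ∀ i : ℕ, 0 ≤ (i : ℝ) * gamC c fun x => (x / a) ^ i := by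
    intro i
    apply mul_nonneg (Nat.cast_nonneg i)
    apply mul_nonneg (by positivity)
    apply intervalIntegral.integral_nonneg hba
    intro x hx
    have hx0 : 0 ≤ x := hb0.trans hx.1
    exact div_nonneg (mul_nonneg (pow_nonneg (div_nonneg hx0 ha0.le) i)
      (Real.sqrt_nonneg _)) hx0
  -- key bound
  have key : ∀ i : ℕ, 1 ≤ i →
      (i : ℝ) * gamC c (fun x => (x / a) ^ i) ≤ C / Real.sqrt i := by
    intro i hi
    obtain ⟨j, rfl⟩ : ∃ j, i = j + 1 := ⟨i - 1, (Nat.succ_pred_eq_of_pos hi).symm⟩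
    set n : ℝ := (j : ℝ) with hn_def
    have hn0 : 0 ≤ n := Nat.cast_nonneg j
    set si : ℝ := Real.sqrt (n + 1) with hsi_def
    have hsi : 0 < si := Real.sqrt_pos.mpr (by linarith)
    have hsii : si * si = n + 1 := Real.mul_self_sqrt (by linarith)
    set g : ℝ → ℝ := fun x => (x / a) ^ (j + 1) * Real.sqrt ((a - x) * (x - b)) / x
      with hg_def
    set ψ : ℝ → ℝ := fun x => (x / a) ^ j * Real.sqrt (a - x) * Real.sqrt a / a with hψ_def
    set φ : ℝ → ℝ := fun x =>
      (x / a) ^ j * (si * (a - x) / 2 + 1 / (2 * si)) * Real.sqrt a / a with hφ_def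
    have hφcont : Continuous φ := by
      apply Continuous.div_const
      apply Continuous.mul _ continuous_const
      exact ((continuous_id.div_const a).pow j).mul
        (((continuous_const.mul (continuous_const.sub continuous_id)).div_const 2).add
          continuous_const)
    have hbr : ∀ x, x ≤ a → 0 ≤ si * (a - x) / 2 + 1 / (2 * si) := fun x hxa =>
      add_nonneg (div_nonneg (mul_nonneg hsi.le (by linarith)) (by norm_num)) (by positivity)
    have hφ0 : ∀ x, 0 ≤ x → x ≤ a → 0 ≤ φ x := by
      intro x hx hxa
      have h2 : (0:ℝ) ≤ (x / a) ^ j := pow_nonneg (div_nonneg hx ha0.le) j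
      simp only [hφ_def]
      exact div_nonneg (mul_nonneg (mul_nonneg h2 (hbr x hxa)) (Real.sqrt_nonneg a)) ha0.le
    -- pointwise bound g ≤ ψ on (0, a]
    have hgψ : ∀ x, 0 < x → x ≤ a → g x ≤ ψ x := by
      intro x hx hxa
      have he : Real.sqrt ((a - x) * (x - b)) = Real.sqrt (a - x) * Real.sqrt (x - b) :=
        Real.sqrt_mul (by linarith) _
      have hs2 : Real.sqrt (x - b) ≤ Real.sqrt a :=
        Real.sqrt_le_sqrt (by linarith)
      have hp : (0:ℝ) ≤ (x / a) ^ j := by positivity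
      have hs1 : 0 ≤ Real.sqrt (a - x) := Real.sqrt_nonneg _
      have hstep : g x = (x / a) ^ j * Real.sqrt (a - x) * Real.sqrt (x - b) / a := by
        simp only [hg_def, he, pow_succ]
        field_simp
      rw [hstep]
      simp only [hψ_def]
      exact div_le_div_of_nonneg_right
        (mul_le_mul_of_nonneg_left hs2 (mul_nonneg hp hs1)) ha0.le
    -- pointwise bound ψ ≤ φ
    have hψφ : ∀ x, 0 ≤ x → x ≤ a → ψ x ≤ φ x := by
      intro x hx hxa
      have h2 : Real.sqrt (a - x) ≤ si * (a - x) / 2 + 1 / (2 * si) :=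
        sqrt_le_lin (by linarith) hsi
      have hp : (0:ℝ) ≤ (x / a) ^ j := pow_nonneg (div_nonneg hx ha0.le) j
      simp only [hψ_def, hφ_def]
      exact div_le_div_of_nonneg_right
        (mul_le_mul_of_nonneg_right (mul_le_mul_of_nonneg_left h2 hp)
          (Real.sqrt_nonneg a)) ha0.le
    -- interval integrability of g
    have hgmble : AEStronglyMeasurable g (volume : Measure ℝ) := by
      apply Measurable.aestronglyMeasurable
      apply Measurable.div _ measurable_id
      exact ((measurable_id.div_const a).pow_const _).mul
        (((measurable_const.sub measurable_id).mul
          (measurable_id.sub measurable_const)).sqrt)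
    have hgbd : ∀ x ∈ Set.Ioc b a, ‖g x‖ ≤ 1 := by
      intro x hx
      have hx0 : 0 < x := lt_of_le_of_lt hb0 hx.1
      have hg0 : 0 ≤ g x := by
        simp only [hg_def]
        exact div_nonneg (mul_nonneg (pow_nonneg (div_nonneg hx0.le ha0.le) _)
          (Real.sqrt_nonneg _)) hx0.le
      rw [Real.norm_eq_abs, abs_of_nonneg hg0]
      refine (hgψ x hx0 hx.2).trans ?_
      have h1 : (x / a) ^ j ≤ 1 := pow_le_one₀ (by positivity) (by
        rw [div_le_one ha0]; exact hx.2)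
      have h2 : Real.sqrt (a - x) ≤ Real.sqrt a := Real.sqrt_le_sqrt (by linarith)
      have hp : (0:ℝ) ≤ (x / a) ^ j := pow_nonneg (div_nonneg hx0.le ha0.le) j
      have hs1 : 0 ≤ Real.sqrt (a - x) := Real.sqrt_nonneg _
      have hmm : (x / a) ^ j * Real.sqrt (a - x) ≤ 1 * Real.sqrt a :=
        mul_le_mul h1 h2 hs1 zero_le_one
      have : ψ x ≤ 1 * Real.sqrt a * Real.sqrt a / a := by
        simp only [hψ_def]
        exact div_le_div_of_nonneg_right
          (mul_le_mul_of_nonneg_right hmm (Real.sqrt_nonneg a)) ha0.le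
      refine this.trans ?_
      rw [one_mul, hsaa, div_self ha0.ne']
    have hgint : IntervalIntegrable g volume b a := by
      rw [intervalIntegrable_iff_integrableOn_Ioc_of_le hba]
      exact Measure.integrableOn_of_bounded (by simp) hgmble
        ((ae_restrict_iff' measurableSet_Ioc).mpr (Filter.Eventually.of_forall hgbd))
    -- step 1 : ∫ g ≤ ∫ φ over [b, a]
    have step1 : (∫ x in b..a, g x) ≤ ∫ x in b..a, φ x := by
      apply intervalIntegral.integral_mono_on hba hgint (hφcont.intervalIntegrable b a)
      intro x hx
      by_cases hx0 : x = 0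
      · subst hx0
        have : g 0 = 0 := by simp [hg_def]
        rw [this]
        exact hφ0 0 le_rfl ha0.le
      · exact (hgψ x (lt_of_le_of_ne (hb0.trans hx.1) (Ne.symm hx0)) hx.2).trans
          (hψφ x (hb0.trans hx.1) hx.2)
    -- step 2 : extend to [0, a]
    have step2 : (∫ x in b..a, φ x) ≤ ∫ x in (0:ℝ)..a, φ x := by
      apply intervalIntegral.integral_mono_interval hb0 hba le_rfl
      · exact (ae_restrict_iff' measurableSet_Ioc).mpr
          (Filter.Eventually.of_forall fun x hx => hφ0 x hx.1.le hx.2)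
      · exact hφcont.intervalIntegrable 0 a
    -- step 3 : compute ∫_0^a φ
    set A : ℝ := (si * a / 2 + 1 / (2 * si)) * Real.sqrt a / a ^ (j + 1) with hA_def
    set B : ℝ := -(si / 2) * Real.sqrt a / a ^ (j + 1) with hB_def
    have hφeq : ∀ x, φ x = A * x ^ j + B * x ^ (j + 1) := by
      intro x
      simp only [hφ_def, hA_def, hB_def, div_pow]
      have hap : (0:ℝ) < a ^ (j + 1) := by positivity
      have hap' : (0:ℝ) < a ^ j := by positivity
      field_simp
      ring
    have step3 : (∫ x in (0:ℝ)..a, φ x)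
        = A * a ^ (j + 1) / (n + 1) + B * a ^ (j + 2) / (n + 2) := by
      simp only [hφeq]
      rw [intervalIntegral.integral_add (f := fun x => A * x ^ j) (g := fun x => B * x ^ (j + 1))
        ((continuous_const.mul (continuous_pow j)).intervalIntegrable 0 a)
        ((continuous_const.mul (continuous_pow (j + 1))).intervalIntegrable 0 a),
        intervalIntegral.integral_const_mul, intervalIntegral.integral_const_mul,
        integral_pow, integral_pow]
      have h0 : (0:ℝ) ^ (j + 1) = 0 := zero_pow (Nat.succ_ne_zero j)
      have h0' : (0:ℝ) ^ (j + 1 + 1) = 0 := zero_pow (Nat.succ_ne_zero _)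
      rw [h0, h0']
      push_cast [hn_def]
      ring_nf
    -- combine
    have hI : (∫ x in b..a, g x)
        ≤ A * a ^ (j + 1) / (n + 1) + B * a ^ (j + 2) / (n + 2) := by
      rw [← step3]; exact step1.trans step2
    have hgam : gamC c (fun x => (x / a) ^ (j + 1))
        = (1 / (2 * Real.pi)) * ∫ x in b..a, g x := by
      simp only [gamC, hg_def, ← ha_def, ← hb_def]
    rw [hgam]
    have hcast : ((j + 1 : ℕ) : ℝ) = n + 1 := by push_cast [hn_def]; ring
    rw [hcast]
    have h2pi : (0:ℝ) < 1 / (2 * Real.pi) := by positivity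
    calc (n + 1) * ((1 / (2 * Real.pi)) * ∫ x in b..a, g x)
        ≤ (n + 1) * ((1 / (2 * Real.pi)) *
            (A * a ^ (j + 1) / (n + 1) + B * a ^ (j + 2) / (n + 2))) := by
          have hn1 : (0:ℝ) ≤ n + 1 := by linarith
          exact mul_le_mul_of_nonneg_left (mul_le_mul_of_nonneg_left hI h2pi.le) hn1
      _ ≤ C / si := by
          have hap : (0:ℝ) < a ^ (j + 1) := by positivity
          have hpow : a ^ (j + 2) = a ^ (j + 1) * a := by ring
          rw [hA_def, hB_def, hC_def, hpow]
          exact final_arith n (Real.sqrt a) si a Real.pi (a ^ (j + 1))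
            hn0 hsi hsii ha0 hsa hpi hap
  -- squeeze
  have hlim : Tendsto (fun i : ℕ => C / Real.sqrt i) atTop (𝓝 0) := by
    apply Filter.Tendsto.div_atTop (tendsto_const_nhds)
    have h1 : Tendsto (fun x : ℝ => Real.sqrt x) atTop atTop := by
      have := tendsto_rpow_atTop (y := (1/2 : ℝ)) (by norm_num)
      refine this.congr' ?_
      filter_upwards [eventually_ge_atTop (0:ℝ)] with x hx
      exact (Real.sqrt_eq_rpow x).symm

    exact h1.comp tendsto_natCast_atTop_atTop
  apply squeeze_zero' (Filter.Eventually.of_forall hnonneg)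
  · filter_upwards [eventually_ge_atTop 1] with i hi
    exact key i hi
  · exact hlim
end
end

section
/- Fix c ∈ [1,∞) and for each positive integer k let h_k(x) = (x/a₊)^k, where a₊ = (1 + √c)². Then there exists a constant C_c ∈ (0,∞) such that k^{3/2}·γ_c(h_k) → C_c as k → ∞. -/
open MeasureTheory ProbabilityTheory Filter Topology

noncomputable section

section AuxLemma

open Set


/-- Laplace-method asymptotics for the semicircle-type integral. -/
private theorem aux_asymp (a m : ℝ) (ha : 0 < a) (hm : 0 ≤ m) (hma : m < a) :
    ∃ C : ℝ, 0 < C ∧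
      Tendsto (fun k : ℕ => (k : ℝ) ^ ((3 : ℝ) / 2) *
          ((1 / (2 * Real.pi)) *
            ∫ x in m..a, (x / a) ^ k * Real.sqrt ((a - x) * (x - m)) / x))
        atTop (𝓝 C) := by
  set d : ℝ := a - m with hd
  have hd0 : 0 < d := by simp [hd]; linarith
  have hda : d ≤ a := by simp [hd]; linarith
  set G : ℕ → ℝ → ℝ := fun k t =>
    (1 - t / (k * a)) ^ (k - 1) * Real.sqrt (t * (d - t / k)) / a with hG
  set F : ℕ → ℝ → ℝ := fun k t => Set.indicator (Set.Ioc 0 ((k : ℝ) * d)) (G k) t with hF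
  set f : ℝ → ℝ := fun t => Real.exp (-t / a) * Real.sqrt (t * d) / a with hf
  set bound : ℝ → ℝ := fun t =>
    Set.indicator (Set.Ioi 0) (fun t => Real.exp (-t / (2 * a)) * Real.sqrt (t * d) / a) t
    with hbound
  -- Step 1: the change-of-variables identity, for k ≥ 2.
  have key : ∀ k : ℕ, 2 ≤ k →
      (k : ℝ) ^ ((3 : ℝ) / 2) *
          ((1 / (2 * Real.pi)) *
            ∫ x in m..a, (x / a) ^ k * Real.sqrt ((a - x) * (x - m)) / x)
        = (1 / (2 * Real.pi)) * ∫ t, F k t := by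
    intro k hk
    have hk0 : (0 : ℝ) < k := by exact_mod_cast Nat.zero_lt_of_lt hk
    have hkne : (k : ℝ) ≠ 0 := ne_of_gt hk0
    have e1 : (∫ x in m..a, (x / a) ^ k * Real.sqrt ((a - x) * (x - m)) / x)
        = ∫ u in (0 : ℝ)..d,
            (((a - u) / a) ^ k * Real.sqrt ((a - (a - u)) * ((a - u) - m)) / (a - u)) := by
      rw [intervalIntegral.integral_comp_sub_left
        (fun x => (x / a) ^ k * Real.sqrt ((a - x) * (x - m)) / x) a]
      congr 1 <;> simp [hd] <;> ring
    have e2 : (∫ t in (0 : ℝ)..((k : ℝ) * d),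
          (((a - t / k) / a) ^ k *
            Real.sqrt ((a - (a - t / k)) * ((a - t / k) - m)) / (a - t / k)))
        = (k : ℝ) * ∫ u in (0 : ℝ)..d,
            (((a - u) / a) ^ k * Real.sqrt ((a - (a - u)) * ((a - u) - m)) / (a - u)) := by
      rw [intervalIntegral.integral_comp_div
        (fun u => ((a - u) / a) ^ k * Real.sqrt ((a - (a - u)) * ((a - u) - m)) / (a - u)) hkne]
      rw [smul_eq_mul, zero_div, mul_div_cancel_left₀ _ hkne]
    have e3 : (∫ t in (0 : ℝ)..((k : ℝ) * d),
          Real.sqrt k * (((a - t / k) / a) ^ k *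
            Real.sqrt ((a - (a - t / k)) * ((a - t / k) - m)) / (a - t / k)))
        = ∫ t in (0 : ℝ)..((k : ℝ) * d), G k t := by
      apply intervalIntegral.integral_congr
      intro t ht
      rw [Set.uIcc_of_le (by positivity)] at ht
      obtain ⟨ht0, htk⟩ := ht
      show Real.sqrt (k:ℝ) * (((a - t / k) / a) ^ k *
        Real.sqrt ((a - (a - t / k)) * ((a - t / k) - m)) / (a - t / k)) = G k t
      have h1 : a - (a - t / k) = t / k := by ring
      have h2 : (a - t / k) - m = d - t / k := by rw [hd]; ring
      rw [h1, h2]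
      have h3 : Real.sqrt k * Real.sqrt ((t / k) * (d - t / k))
          = Real.sqrt (t * (d - t / k)) := by
        rw [← Real.sqrt_mul (le_of_lt hk0)]
        congr 1
        field_simp
      have hbase : (a - t / k) / a = 1 - t / (k * a) := by
        field_simp
      have h4 : ((a - t / k) / a) ^ k / (a - t / k)
          = (1 - t / (k * a)) ^ (k - 1) / a := by
        rcases eq_or_ne (a - t / k) 0 with h | h
        · have hb0 : 1 - t / (k * a) = 0 := by rw [← hbase, h, zero_div]
          rw [h, hb0, zero_div, zero_pow (show k ≠ 0 by omega),
            zero_pow (show k - 1 ≠ 0 by omega), zero_div, zero_div]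
        · rw [← hbase]
          have hp : ((a - t / (k:ℝ)) / a) ^ k
              = ((a - t / (k:ℝ)) / a) ^ (k - 1) * ((a - t / (k:ℝ)) / a) := by
            rw [← pow_succ, Nat.sub_add_cancel (by omega)]
          rw [hp, mul_div_assoc, div_div, mul_comm a (a - t / (k:ℝ)),
            div_mul_cancel_left₀ h]
          ring
      calc Real.sqrt k * (((a - t / k) / a) ^ k *
            Real.sqrt ((t / k) * (d - t / k)) / (a - t / k))
          = (((a - t / k) / a) ^ k / (a - t / k)) *
            (Real.sqrt k * Real.sqrt ((t / k) * (d - t / k))) := by ring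
        _ = ((1 - t / (k * a)) ^ (k - 1) / a) * Real.sqrt (t * (d - t / k)) := by
            rw [h3, h4]
        _ = G k t := by rw [hG]; ring
    have e4 : (∫ t in (0 : ℝ)..((k : ℝ) * d), G k t) = ∫ t, F k t := by
      rw [intervalIntegral.integral_of_le (by positivity),
        ← MeasureTheory.integral_indicator measurableSet_Ioc]
    have hk32 : (k : ℝ) ^ ((3 : ℝ) / 2) = k * Real.sqrt k := by
      rw [show (3 : ℝ) / 2 = 1 + 1 / 2 by norm_num, Real.rpow_add hk0, Real.rpow_one,
        Real.sqrt_eq_rpow]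
    have e2' : (∫ u in (0 : ℝ)..d,
          (((a - u) / a) ^ k * Real.sqrt ((a - (a - u)) * ((a - u) - m)) / (a - u)))
        = (k : ℝ)⁻¹ * ∫ t in (0 : ℝ)..((k : ℝ) * d),
            (((a - t / k) / a) ^ k *
              Real.sqrt ((a - (a - t / k)) * ((a - t / k) - m)) / (a - t / k)) := by
      rw [e2]
      field_simp
    rw [e1, e2', ← e4, ← e3, intervalIntegral.integral_const_mul, hk32]
    have hsk : Real.sqrt (k : ℝ) ≠ 0 := by positivity
    field_simp
  -- Step 2: dominated convergence.
  have hGcont : ∀ k : ℕ, Continuous (G k) := by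
    intro k
    apply Continuous.div_const
    apply Continuous.mul
    · exact (continuous_const.sub (continuous_id.div_const _)).pow _
    · exact (continuous_id.mul (continuous_const.sub (continuous_id.div_const _))).sqrt
  have hmeas : ∀ᶠ k : ℕ in atTop, AEStronglyMeasurable (F k) (volume : Measure ℝ) :=
    Filter.Eventually.of_forall fun k =>
      ((hGcont k).aestronglyMeasurable).indicator measurableSet_Ioc
  have hbound_nonneg : ∀ t, 0 ≤ bound t := fun t =>
    Set.indicator_nonneg (fun x _ => by positivity) t
  have h_bound : ∀ᶠ k : ℕ in atTop, ∀ᵐ t ∂(volume : Measure ℝ), ‖F k t‖ ≤ bound t := by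
    filter_upwards [eventually_ge_atTop 2] with k hk
    refine Filter.Eventually.of_forall fun t => ?_
    by_cases ht : t ∈ Set.Ioc 0 ((k : ℝ) * d)
    · have ht0 : 0 < t := ht.1
      have htk : t ≤ (k : ℝ) * d := ht.2
      have hk2 : (2 : ℝ) ≤ k := by exact_mod_cast hk
      have hk0 : (0 : ℝ) < k := by linarith
      have hx1 : 0 ≤ 1 - t / ((k : ℝ) * a) := by
        have h1 : t / ((k : ℝ) * a) ≤ 1 := by
          rw [div_le_one (by positivity)]
          calc t ≤ (k : ℝ) * d := htk
            _ ≤ (k : ℝ) * a := by nlinarith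
        linarith
      have h2 : (1 - t / ((k : ℝ) * a)) ^ (k - 1) ≤ Real.exp (-t / (2 * a)) := by
        have step1 : (1 - t / ((k : ℝ) * a)) ^ (k - 1)
            ≤ Real.exp (-(t / ((k : ℝ) * a))) ^ (k - 1) :=
          pow_le_pow_left₀ hx1
            (by linarith [Real.add_one_le_exp (-(t / ((k : ℝ) * a)))]) _
        have step2 : Real.exp (-(t / ((k : ℝ) * a))) ^ (k - 1)
            = Real.exp (((k - 1 : ℕ) : ℝ) * (-(t / ((k : ℝ) * a)))) :=
          (Real.exp_nat_mul _ _).symm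
        have hcast : ((k - 1 : ℕ) : ℝ) = (k : ℝ) - 1 := by
          have h1 : (1 : ℕ) ≤ k := by omega
          push_cast [Nat.cast_sub h1]
          ring
        have step3 : ((k : ℝ) - 1) * (-(t / ((k : ℝ) * a))) ≤ -t / (2 * a) := by
          have hkey : -t / (2 * a) - ((k : ℝ) - 1) * (-(t / ((k : ℝ) * a)))
              = t * ((k : ℝ) - 2) / (2 * (k : ℝ) * a) := by
            field_simp
            ring
          have : 0 ≤ t * ((k : ℝ) - 2) / (2 * (k : ℝ) * a) :=
            div_nonneg (mul_nonneg ht0.le (by linarith)) (by positivity)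
          linarith [hkey ▸ this]
        calc (1 - t / ((k : ℝ) * a)) ^ (k - 1)
            ≤ Real.exp (-(t / ((k : ℝ) * a))) ^ (k - 1) := step1
          _ = Real.exp (((k : ℝ) - 1) * (-(t / ((k : ℝ) * a)))) := by rw [step2, hcast]
          _ ≤ Real.exp (-t / (2 * a)) := Real.exp_le_exp.mpr step3
      have h3 : Real.sqrt (t * (d - t / (k : ℝ))) ≤ Real.sqrt (t * d) := by
        apply Real.sqrt_le_sqrt
        have : 0 ≤ t / (k : ℝ) := by positivity
        nlinarith
      have hgnn : 0 ≤ G k t := by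
        simp only [hG]
        exact div_nonneg (mul_nonneg (pow_nonneg hx1 _) (Real.sqrt_nonneg _)) ha.le
      simp only [hF, hbound]
      rw [Set.indicator_of_mem ht, Set.indicator_of_mem (Set.mem_Ioi.mpr ht0),
        Real.norm_eq_abs, abs_of_nonneg hgnn]
      simp only [hG]
      gcongr
    · simp only [hF]
      rw [Set.indicator_of_notMem ht, norm_zero]
      exact hbound_nonneg t
  have bound_int : Integrable bound (volume : Measure ℝ) := by
    rw [hbound, integrable_indicator_iff measurableSet_Ioi]
    have h1 : IntegrableOn (fun x : ℝ => x ^ ((1 : ℝ) / 2) *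
        Real.exp (-(1 / (2 * a)) * x ^ (1 : ℝ))) (Set.Ioi 0) :=
      integrableOn_rpow_mul_exp_neg_mul_rpow (by norm_num) (by norm_num) (by positivity)
    have h2 : IntegrableOn (fun x : ℝ => x ^ ((1 : ℝ) / 2) *
        Real.exp (-(1 / (2 * a)) * x ^ (1 : ℝ)) * (Real.sqrt d / a)) (Set.Ioi 0) :=
      h1.mul_const (Real.sqrt d / a)
    apply h2.congr_fun ?_ measurableSet_Ioi
    intro x hx
    have hx0 : 0 < x := hx
    simp only [Real.rpow_one, ← Real.sqrt_eq_rpow]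
    rw [Real.sqrt_mul hx0.le, show -(1 / (2 * a)) * x = -x / (2 * a) by ring]
    ring
  have h_lim : ∀ᵐ t ∂(volume : Measure ℝ),
      Tendsto (fun k : ℕ => F k t) atTop (𝓝 (f t)) := by
    refine Filter.Eventually.of_forall fun t => ?_
    rcases le_or_gt t 0 with ht | ht
    · have hft : f t = 0 := by
        simp only [hf]
        rw [Real.sqrt_eq_zero'.mpr (by nlinarith : t * d ≤ 0), mul_zero, zero_div]
      have hFt : ∀ k : ℕ, F k t = 0 := by
        intro k
        simp only [hF]
        exact Set.indicator_of_notMem (fun h => absurd h.1 (not_lt.mpr ht)) _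
      simp only [hFt, hft]
      exact tendsto_const_nhds
    · have hA : Tendsto (fun k : ℕ => (1 - t / ((k : ℝ) * a)) ^ k) atTop
          (𝓝 (Real.exp (-t / a))) := by
        refine (Real.tendsto_one_add_div_pow_exp (-t / a)).congr fun k => ?_
        congr 1
        ring
      have hB : Tendsto (fun k : ℕ => 1 - t / ((k : ℝ) * a)) atTop (𝓝 1) := by
        have h0 : Tendsto (fun k : ℕ => (t / a) / (k : ℝ)) atTop (𝓝 0) :=
          tendsto_const_div_atTop_nhds_zero_nat _
        have h1 := (tendsto_const_nhds (x := (1 : ℝ)) (f := atTop)).sub h0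
        rw [sub_zero] at h1
        refine h1.congr fun k => ?_
        ring
      have hpos : ∀ᶠ k : ℕ in atTop, (0 : ℝ) < 1 - t / ((k : ℝ) * a) :=
        hB.eventually (eventually_gt_nhds one_pos)
      have hE : Tendsto (fun k : ℕ => (1 - t / ((k : ℝ) * a)) ^ (k - 1)) atTop
          (𝓝 (Real.exp (-t / a))) := by
        have hdiv := hA.div hB one_ne_zero
        rw [div_one] at hdiv
        refine hdiv.congr' ?_
        filter_upwards [hpos, eventually_ge_atTop 1] with k hkpos hk1
        simp only [Pi.div_apply]
        have hsplit : (1 - t / ((k : ℝ) * a)) ^ k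
            = (1 - t / ((k : ℝ) * a)) ^ (k - 1) * (1 - t / ((k : ℝ) * a)) := by
          rw [← pow_succ, Nat.sub_add_cancel hk1]
        rw [hsplit, mul_div_cancel_right₀ _ (ne_of_gt hkpos)]
      have hC : Tendsto (fun k : ℕ => Real.sqrt (t * (d - t / (k : ℝ)))) atTop
          (𝓝 (Real.sqrt (t * d))) := by
        have h0 : Tendsto (fun k : ℕ => t / (k : ℝ)) atTop (𝓝 0) :=
          tendsto_const_div_atTop_nhds_zero_nat _
        have h1 := ((tendsto_const_nhds (x := d) (f := atTop)).sub h0).const_mul t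
        rw [sub_zero] at h1
        exact h1.sqrt
      have hGt : Tendsto (fun k : ℕ => G k t) atTop (𝓝 (f t)) := by
        simp only [hG, hf]
        exact (hE.mul hC).div_const a
      refine Tendsto.congr' ?_ hGt
      filter_upwards [eventually_ge_atTop (max 1 ⌈t / d⌉₊)] with k hk
      have h1 : (⌈t / d⌉₊ : ℝ) ≤ (k : ℝ) := by
        exact_mod_cast le_trans (le_max_right _ _) hk
      have h2 : t / d ≤ (⌈t / d⌉₊ : ℝ) := Nat.le_ceil _
      have htk : t ≤ (k : ℝ) * d := by
        calc t = (t / d) * d := by field_simp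
          _ ≤ (k : ℝ) * d := by nlinarith
      simp only [hF]
      rw [Set.indicator_of_mem (Set.mem_Ioc.mpr ⟨ht, htk⟩)]
  have hdct := MeasureTheory.tendsto_integral_filter_of_dominated_convergence
    bound hmeas h_bound bound_int h_lim
  -- Conclusion.
  have hfnn : (0 : ℝ → ℝ) ≤ᵐ[volume] f :=
    Filter.Eventually.of_forall fun t => by simp only [hf]; positivity
  have hfcont : Continuous f := by
    apply Continuous.div_const
    exact (Real.continuous_exp.comp (continuous_id.neg.div_const a)).mul
      (continuous_id.mul continuous_const).sqrt
  have hfint : Integrable f (volume : Measure ℝ) := by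
    apply Integrable.mono' bound_int hfcont.aestronglyMeasurable
    refine Filter.Eventually.of_forall fun t => ?_
    rcases le_or_gt t 0 with ht | ht
    · have hft : f t = 0 := by
        simp only [hf]
        rw [Real.sqrt_eq_zero'.mpr (by nlinarith : t * d ≤ 0), mul_zero, zero_div]
      rw [hft, norm_zero]
      exact hbound_nonneg t
    · have hexp : -t / a ≤ -t / (2 * a) := by
        rw [div_le_div_iff₀ (by positivity) (by positivity)]
        nlinarith
      rw [Real.norm_eq_abs, abs_of_nonneg (by simp only [hf]; positivity)]
      simp only [hf, hbound]
      rw [Set.indicator_of_mem (Set.mem_Ioi.mpr ht)]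
      gcongr
      all_goals first
        | exact Real.sqrt_nonneg _
        | exact Real.exp_le_exp.mpr hexp
  have hfpos : 0 < ∫ t, f t := by
    rw [MeasureTheory.integral_pos_iff_support_of_nonneg_ae hfnn hfint]
    have hsub : Set.Ioi (0 : ℝ) ⊆ Function.support f := by
      intro t ht
      have ht0 : (0 : ℝ) < t := ht
      simp only [hf, Function.mem_support]
      have htd : 0 < t * d := mul_pos ht0 hd0
      positivity
    calc (0 : ENNReal) < volume (Set.Ioi (0 : ℝ)) := by simp [Real.volume_Ioi]
      _ ≤ volume (Function.support f) := measure_mono hsub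
  refine ⟨(1 / (2 * Real.pi)) * ∫ t, f t, by positivity, ?_⟩
  refine Tendsto.congr' ?_ (hdct.const_mul (1 / (2 * Real.pi)))
  filter_upwards [eventually_ge_atTop 2] with k hk
  exact (key k hk).symm


end AuxLemma

/-- Lemma 6.2 of the paper: with `h_k(x) = (x/a₊)^k`, there is a constant `C_c ∈ (0, ∞)` with
`k^{3/2} γ_c(h_k) → C_c` as `k → ∞`. -/
theorem gamC_monomial_asymptotics (c : ℝ) (hc : 1 ≤ c) :
    ∃ C : ℝ, 0 < C ∧
      Tendsto (fun k : ℕ => (k : ℝ) ^ ((3 : ℝ) / 2) * gamC c fun x => (x / aplus c) ^ k)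
        atTop (𝓝 C) := by
  have hs1 : 1 ≤ Real.sqrt c := by
    rw [show (1 : ℝ) = Real.sqrt 1 by simp]
    exact Real.sqrt_le_sqrt hc
  have ha : 0 < aplus c := by rw [aplus]; positivity
  have hm : 0 ≤ aminus c := sq_nonneg _
  have hma : aminus c < aplus c := by
    rw [aplus, aminus]; nlinarith
  obtain ⟨C, hC, hT⟩ := aux_asymp (aplus c) (aminus c) ha hm hma
  exact ⟨C, hC, by simpa only [gamC] using hT⟩
end
end
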